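/- arXiv:2604.25811 — 2 statements merged into one kernel-verified Lean document; each statement's English description precedes it below -/
import Mathlib

section
/- For all integers n ≥ 8, the tortoise complexity of the regular paperfolding word equals its factor complexity: ρ^t_f(n) = ρ_f(n). -/
/-- The tortoise operation on binary words: if the word contains a 1 (`true`),
delete the first occurrence of 1 and append a 1 at the right end; otherwise do nothing. -/
def tortoise (w : List Bool) : List Bool :=
  if true ∈ w then (w.erase true) ++ [true] else w

/-- `w` is a factor (subword) of the infinite word `x`. -/
def IsFactor (x : ℕ → Bool) (w : List Bool) : Prop :=
  ∃ i, w = (List.range w.length).map (fun t => x (i + t))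

/-- The set of length-`n` factors of `x`. -/
def factorSet (x : ℕ → Bool) (n : ℕ) : Set (List Bool) :=
  {w | w.length = n ∧ IsFactor x w}

/-- The factor complexity of `x`. -/
noncomputable def rho (x : ℕ → Bool) (n : ℕ) : ℕ :=
  (factorSet x n).ncard

/-- The tortoise complexity of `x`: the number of `∼ₜ`-equivalence classes of
length-`n` factors of `x`, i.e. the number of distinct images under `tortoise`. -/
noncomputable def rhoTort (x : ℕ → Bool) (n : ℕ) : ℕ :=
  (tortoise '' factorSet x n).ncard

/-- The `k`-tortoise complexity of `x`: the number of equivalence classes of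
length-`n` factors of `x` under `tortoise^[k] w = tortoise^[k] v`. -/
noncomputable def rhoTortK (k : ℕ) (x : ℕ → Bool) (n : ℕ) : ℕ :=
  ((tortoise^[k]) '' factorSet x n).ncard

/-- `y` is a left special factor of `x`: both `0y` and `1y` are factors of `x`. -/
def LeftSpecial (x : ℕ → Bool) (y : List Bool) : Prop :=
  IsFactor x (false :: y) ∧ IsFactor x (true :: y)

/-- The Thue–Morse sequence: `tm n` is the parity of the number of 1's in the
binary expansion of `n` (`true` = 1). -/
def tm (n : ℕ) : Bool :=
  decide ((Nat.digits 2 n).sum % 2 = 1)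

/-- The regular paperfolding sequence, reindexed so that `pf m = f_{m+1}`:
writing `m + 1 = n' * 2^k` with `n'` odd, `pf m = true` iff `n' ≡ 3 (mod 4)`. -/
def pf (m : ℕ) : Bool :=
  decide ((m + 1) / 2 ^ (padicValNat 2 (m + 1)) % 4 = 3)

/-!
If `tortoise w = tortoise v` and both words contain a `1`, then erasing the first `1` from `w`
and from `v` gives the same word. When the first `1` lies among the first `k` letters, this
erased word and the prefix of length `k` determine the word, and the two prefixes have equal
tortoise images. Hence tortoise is injective on the factors of length `n ≥ k` once it is
injective on the factors of length `k` and each of these contains a `1`.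

For the paperfolding word both hold with `k = 8`, which is a finite check: since
`pf (2c) = c mod 2` and `pf (2c + 1) = pf c`, the factor of length `2L` at position `m` is
determined by `m mod 4` and the factor of length `L` at `m / 2`, so every factor of length `8`
already occurs at a position below `48`.
-/

open Set

theorem List.erase_eq_erase_take_append_drop {α : Type*} [DecidableEq α] {a : α} {l : List α}
    (k : ℕ) (h : a ∈ l.take k) : l.erase a = (l.take k).erase a ++ l.drop k := by
  conv_lhs => rw [← List.take_append_drop k l]
  exact List.erase_append_left _ h

theorem tortoise_of_true_mem {w : List Bool} (h : true ∈ w) :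
    tortoise w = w.erase true ++ [true] :=
  if_pos h

theorem tortoise_injOn_of_true_mem_take {S : Set (List Bool)} (k : ℕ)
    (hS : ∀ w ∈ S, true ∈ w.take k) (hinj : InjOn tortoise (List.take k '' S)) :
    InjOn tortoise S := by
  intro w hw v hv hwv
  have hw1 := hS w hw
  have hv1 := hS v hv
  have herase : w.erase true = v.erase true := by
    rw [tortoise_of_true_mem (List.mem_of_mem_take hw1),
      tortoise_of_true_mem (List.mem_of_mem_take hv1)] at hwv
    exact List.append_cancel_right hwv
  have hlen : w.length = v.length := by
    have := congrArg List.length herase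
    rw [List.length_erase_of_mem (List.mem_of_mem_take hw1),
      List.length_erase_of_mem (List.mem_of_mem_take hv1)] at this
    have := List.length_pos_of_mem (List.mem_of_mem_take hw1)
    have := List.length_pos_of_mem (List.mem_of_mem_take hv1)
    omega
  rw [List.erase_eq_erase_take_append_drop k hw1,
    List.erase_eq_erase_take_append_drop k hv1] at herase
  obtain ⟨hhead, hdrop⟩ := List.append_inj herase (by
    simp only [List.length_erase_of_mem hw1, List.length_erase_of_mem hv1, List.length_take, hlen])
  have htake : w.take k = v.take k := hinj (mem_image_of_mem _ hw) (mem_image_of_mem _ hv) (by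
    rw [tortoise_of_true_mem hw1, tortoise_of_true_mem hv1, hhead])
  rw [← List.take_append_drop k w, ← List.take_append_drop k v, htake, hdrop]

def factorAt (x : ℕ → Bool) (i n : ℕ) : List Bool :=
  (List.range n).map fun t => x (i + t)

theorem factorAt_eq_factorAt_iff {x : ℕ → Bool} {i j n : ℕ} :
    factorAt x i n = factorAt x j n ↔ ∀ t < n, x (i + t) = x (j + t) := by
  simp [factorAt, List.map_inj_left]

theorem mem_factorSet_iff {x : ℕ → Bool} {n : ℕ} {w : List Bool} :
    w ∈ factorSet x n ↔ ∃ i, w = factorAt x i n := by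
  constructor
  · rintro ⟨rfl, hw⟩
    exact hw
  · rintro ⟨i, rfl⟩
    exact ⟨by simp [factorAt], i, by simp [factorAt]⟩

theorem take_mem_factorSet {x : ℕ → Bool} {k n : ℕ} {w : List Bool} (hkn : k ≤ n)
    (hw : w ∈ factorSet x n) : w.take k ∈ factorSet x k := by
  obtain ⟨i, rfl⟩ := mem_factorSet_iff.1 hw
  exact mem_factorSet_iff.2 ⟨i, by simp [factorAt, ← List.map_take, hkn]⟩

theorem pf_two_mul (c : ℕ) : pf (2 * c) = decide (c % 2 = 1) := by
  have hv : padicValNat 2 (2 * c + 1) = 0 := padicValNat.eq_zero_of_not_dvd (by omega)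
  simp only [pf, hv, pow_zero, Nat.div_one]
  exact decide_eq_decide.2 (by omega)

theorem pf_two_mul_add_one (c : ℕ) : pf (2 * c + 1) = pf c := by
  have hv : padicValNat 2 (2 * (c + 1)) = padicValNat 2 (c + 1) + 1 := by
    rw [padicValNat.mul (by norm_num) (by omega), padicValNat.self (by norm_num), add_comm]
  simp only [pf, show 2 * c + 1 + 1 = 2 * (c + 1) by ring, hv, pow_succ']
  rw [Nat.mul_div_mul_left _ _ (by norm_num)]

theorem pf_factorAt_two_mul_eq {m m' L : ℕ} (hmod : m % 4 = m' % 4)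
    (h : factorAt pf (m / 2) L = factorAt pf (m' / 2) L) :
    factorAt pf m (2 * L) = factorAt pf m' (2 * L) := by
  rw [factorAt_eq_factorAt_iff] at h ⊢
  intro t ht
  rcases Nat.even_or_odd' (m + t) with ⟨c, hc | hc⟩
  · rw [hc, show m' + t = 2 * (c + m' / 2 - m / 2) by omega, pf_two_mul, pf_two_mul]
    exact decide_eq_decide.2 (by omega)
  · have hs := h (c - m / 2) (by omega)
    rw [hc, show m' + t = 2 * (m' / 2 + (c - m / 2)) + 1 by omega, pf_two_mul_add_one,
      pf_two_mul_add_one]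
    rwa [show m / 2 + (c - m / 2) = c by omega] at hs

theorem exists_lt_factorAt_pf_eq (k m : ℕ) :
    ∃ m' < 6 * 2 ^ k, m' % 2 = m % 2 ∧ factorAt pf m (2 ^ k) = factorAt pf m' (2 ^ k) := by
  induction k generalizing m with
  | zero =>
    simp only [pow_zero, factorAt_eq_factorAt_iff, Nat.lt_one_iff, forall_eq, add_zero]
    rcases Nat.even_or_odd' m with ⟨c, rfl | rfl⟩
    · exact ⟨2 * (c % 2), by omega, by omega, by
        rw [pf_two_mul, pf_two_mul]; exact decide_eq_decide.2 (by omega)⟩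
    · rw [pf_two_mul_add_one]
      cases hc : pf c
      · exact ⟨1, by omega, by omega, by decide +kernel⟩
      · exact ⟨5, by omega, by omega, by decide +kernel⟩
  | succ k ih =>
    obtain ⟨c', hc', hpar, hfac⟩ := ih (m / 2)
    refine ⟨2 * c' + m % 2, by rw [pow_succ]; omega, by omega, ?_⟩
    rw [pow_succ, mul_comm]
    exact pf_factorAt_two_mul_eq (by omega) (by rwa [show (2 * c' + m % 2) / 2 = c' by omega])

theorem exists_lt_eq_factorAt_of_mem_factorSet_pf_eight {w : List Bool}
    (hw : w ∈ factorSet pf 8) : ∃ i < 48, w = factorAt pf i 8 := by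
  obtain ⟨m, rfl⟩ := mem_factorSet_iff.1 hw
  obtain ⟨i, hi, -, h⟩ := exists_lt_factorAt_pf_eq 3 m
  exact ⟨i, hi, h⟩

theorem true_mem_factorAt_pf_eight : ∀ i < 48, true ∈ factorAt pf i 8 := by
  decide +kernel

theorem tortoise_factorAt_pf_eight_injective :
    ∀ i < 48, ∀ j < 48, tortoise (factorAt pf i 8) = tortoise (factorAt pf j 8) →
      factorAt pf i 8 = factorAt pf j 8 := by
  decide +kernel

theorem tortoise_injOn_factorSet_pf_eight : InjOn tortoise (factorSet pf 8) := by
  intro w hw v hv hwv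
  obtain ⟨i, hi, rfl⟩ := exists_lt_eq_factorAt_of_mem_factorSet_pf_eight hw
  obtain ⟨j, hj, rfl⟩ := exists_lt_eq_factorAt_of_mem_factorSet_pf_eight hv
  exact tortoise_factorAt_pf_eight_injective i hi j hj hwv

theorem tortoise_injOn_factorSet_pf {n : ℕ} (hn : 8 ≤ n) : InjOn tortoise (factorSet pf n) := by
  refine tortoise_injOn_of_true_mem_take 8 (fun w hw => ?_)
    (tortoise_injOn_factorSet_pf_eight.mono (image_subset_iff.2 fun _ => take_mem_factorSet hn))
  obtain ⟨i, hi, hwi⟩ :=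
    exists_lt_eq_factorAt_of_mem_factorSet_pf_eight (take_mem_factorSet hn hw)
  exact hwi ▸ true_mem_factorAt_pf_eight i hi

/-- for all `n ≥ 8`, the tortoise complexity of the paperfolding word
equals its factor complexity. -/
theorem stmt_4 (n : ℕ) (hn : 8 ≤ n) : rhoTort pf n = rho pf n :=
  (tortoise_injOn_factorSet_pf hn).ncard_image
end

section
/- If z is a factor of the Thue–Morse word t of length at least 5, then all occurrences of z in t begin at positions of the same parity; that is, if t_i t_{i+1} ⋯ t_{i+|z|−1} = z and t_j t_{j+1} ⋯ t_{j+|z|−1} = z, then i ≡ j (mod 2). -/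
lemma tm_even (n : ℕ) : tm (2 * n) = tm n := by
  rcases Nat.eq_zero_or_pos n with h | h
  · simp [h]
  · unfold tm
    rw [Nat.digits_def' (by norm_num : 1 < 2) (by omega)]
    simp [Nat.mul_div_cancel_left _ (by norm_num : 0 < 2), Nat.mul_mod_right]

lemma tm_odd (n : ℕ) : tm (2 * n + 1) = !tm n := by
  unfold tm
  rw [Nat.digits_def' (by norm_num : 1 < 2) (by omega)]
  have h1 : (2 * n + 1) % 2 = 1 := by omega
  have h2 : (2 * n + 1) / 2 = n := by omega
  rw [h1, h2]
  rcases Nat.mod_two_eq_zero_or_one (Nat.digits 2 n).sum with h | h <;>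
    simp [List.sum_cons, Nat.add_mod, h]

lemma no_cube (n : ℕ) : ¬(tm n = tm (n + 1) ∧ tm (n + 1) = tm (n + 2)) := by
  rintro ⟨h1, h2⟩
  rcases Nat.even_or_odd n with ⟨k, hk⟩ | ⟨k, hk⟩
  · rw [show n = 2 * k by omega, tm_even, tm_odd] at h1
    cases tm k <;> simp_all
  · rw [show n + 1 = 2 * (k + 1) by omega, show n + 2 = 2 * (k + 1) + 1 by omega] at h2
    rw [tm_even, tm_odd] at h2
    cases tm (k+1) <;> simp_all

lemma main_aux (a b : ℕ) (h : ∀ t < 5, tm (2 * a + t) = tm (2 * b + 1 + t)) : False := by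
  have h0 := h 0 (by norm_num)
  have h1 := h 1 (by norm_num)
  have h2 := h 2 (by norm_num)
  have h3 := h 3 (by norm_num)
  have h4 := h 4 (by norm_num)
  rw [show 2 * a + 0 = 2 * a by ring, tm_even, tm_odd] at h0
  rw [show 2 * a + 1 = 2 * a + 1 by ring, show 2 * b + 1 + 1 = 2 * (b + 1) by ring,
      tm_odd, tm_even] at h1
  rw [show 2 * a + 2 = 2 * (a + 1) by ring, show 2 * b + 1 + 2 = 2 * (b + 1) + 1 by ring,
      tm_even, tm_odd] at h2
  rw [show 2 * a + 3 = 2 * (a + 1) + 1 by ring, show 2 * b + 1 + 3 = 2 * (b + 2) by ring,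
      tm_odd, tm_even] at h3
  rw [show 2 * a + 4 = 2 * (a + 2) by ring, show 2 * b + 1 + 4 = 2 * (b + 2) + 1 by ring,
      tm_even, tm_odd] at h4
  apply no_cube b
  constructor
  · cases hb : tm b <;> cases ha : tm a <;> simp_all
  · cases hb : tm b <;> cases ha : tm a <;> simp_all

/-- all occurrences of a factor of the Thue–Morse word of length at
least 5 begin at positions of the same parity. -/
theorem stmt_11 (z : List Bool) (hz : 5 ≤ z.length) (i j : ℕ)
    (hi : z = (List.range z.length).map (fun t => tm (i + t)))
    (hj : z = (List.range z.length).map (fun t => tm (j + t))) :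
    i % 2 = j % 2 := by
  have key : ∀ t < 5, tm (i + t) = tm (j + t) := by
    intro t ht
    have ht' : t < z.length := lt_of_lt_of_le ht hz
    have e1 : z[t]? = some (tm (i + t)) := by
      rw [hi]; simp [List.getElem?_map, List.getElem?_range, ht']
    have e2 : z[t]? = some (tm (j + t)) := by
      rw [hj]; simp [List.getElem?_map, List.getElem?_range, ht']
    rw [e1] at e2; exact Option.some.inj e2
  rcases Nat.mod_two_eq_zero_or_one i with hie | hio <;>
    rcases Nat.mod_two_eq_zero_or_one j with hje | hjo
  · omega
  · exfalso
    apply main_aux (i / 2) (j / 2)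
    intro t ht
    have := key t ht
    rwa [show i = 2 * (i / 2) by omega, show j = 2 * (j / 2) + 1 by omega] at this
  · exfalso
    apply main_aux (j / 2) (i / 2)
    intro t ht
    have := (key t ht).symm
    rwa [show j = 2 * (j / 2) by omega, show i = 2 * (i / 2) + 1 by omega] at this
  · omega
end
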